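/- In the Whitney cone setup described in the context, diam(T_S) ≤ C diam(S), where C depends only on θ and A. -/

import Mathlib

/-!
A point `y` of `T_S` lies outside the cone `X(x, V⊥, θ)` for every `x ∈ K`, so
`cos θ · |y - x| ≤ |Π y - Π x|`. Fixing `s ∈ S` and `x ∈ K`, every such `y` is therefore within
`(diam S + |s - Π x|) / cos θ` of `x`, so `diam T_S ≤ 2 (diam S + |s - Π x|) / cos θ`. Taking the
infimum over `s` and `x` and using the Whitney condition `dist(S, Π K) ≤ A diam S` gives the bound
with `C = 2 (1 + A) / cos θ`.
-/

open Set Metric MeasureTheory ENNReal Filter Topology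

noncomputable abbrev GraphSpace (d m : ℕ) :=
  WithLp 2 (EuclideanSpace ℝ (Fin d) × EuclideanSpace ℝ (Fin m))

/-- Orthogonal projection `Π : ℝⁿ = ℝᵈ × ℝ^{n-d} → ℝᵈ` onto the first factor. -/
noncomputable def proj1 {d m : ℕ} (y : GraphSpace d m) : EuclideanSpace ℝ (Fin d) :=
  (WithLp.equiv 2 (EuclideanSpace ℝ (Fin d) × EuclideanSpace ℝ (Fin m)) y).1

/-- The subspace `V⊥ = {0} × ℝ^{n-d}`. -/
def VperpSet (d m : ℕ) : Set (GraphSpace d m) := {z | proj1 z = 0}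

/-- `y ∈ X(x, V⊥, θ)`, i.e. `dist(y - x, V⊥) < cos θ · |y - x|`. -/
noncomputable def InPerpCone (θ : ℝ) {d m : ℕ} (x y : GraphSpace d m) : Prop :=
  infDist (y - x) (VperpSet d m) < Real.cos θ * dist y x

/-- The graph map `F(t) = (t, f(t))`. -/
noncomputable def graphMap {d m : ℕ} (f : EuclideanSpace ℝ (Fin d) → EuclideanSpace ℝ (Fin m))
    (t : EuclideanSpace ℝ (Fin d)) : GraphSpace d m :=
  (WithLp.equiv 2 (EuclideanSpace ℝ (Fin d) × EuclideanSpace ℝ (Fin m))).symm (t, f t)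

/-- The bad part `B(K)` of `E` inside the ball `B'`. -/
def badPart (θ r : ℝ) {d m : ℕ} (E K B' : Set (GraphSpace d m)) : Set (GraphSpace d m) :=
  {y | y ∈ E ∩ B' ∧ ∀ x ∈ K, ¬ (y ∈ ball x r ∧ InPerpCone θ x y)}

/-- The Whitney piece `T_S = (S × ℝ^{n-d}) ∩ B(K)`. -/
def whitneyPiece {d m : ℕ} (S : Set (EuclideanSpace ℝ (Fin d)))
    (BK : Set (GraphSpace d m)) : Set (GraphSpace d m) :=
  {y ∈ BK | proj1 y ∈ S}

/-- Distance between two sets. -/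
noncomputable def setEDist {α : Type*} [PseudoEMetricSpace α] (s t : Set α) : ℝ≥0∞ :=
  ⨅ y ∈ s, EMetric.infEdist y t

/-- An axis-parallel cube in `ℝᵈ`. -/
def IsCube {d : ℕ} (S : Set (EuclideanSpace ℝ (Fin d))) : Prop :=
  ∃ (c : EuclideanSpace ℝ (Fin d)) (l : ℝ), 0 < l ∧
    S = {t | ∀ i, c i ≤ t i ∧ t i ≤ c i + l}

section Cone

variable {d m : ℕ}

lemma proj1_sub (y x : GraphSpace d m) : proj1 (y - x) = proj1 y - proj1 x := by
  simp [proj1, WithLp.ofLp_sub]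

lemma infDist_vperpSet_le (z : GraphSpace d m) : infDist z (VperpSet d m) ≤ ‖proj1 z‖ := by
  let w : GraphSpace d m := WithLp.toLp 2 (0, z.snd)
  have hw : w ∈ VperpSet d m := rfl
  have hzw : dist z w = ‖proj1 z‖ := by
    simp [w, WithLp.prod_dist_eq_of_L2, proj1, Real.sqrt_sq (norm_nonneg _)]
  exact hzw ▸ infDist_le_dist_of_mem hw

lemma cos_mul_dist_le_of_not_inPerpCone {θ : ℝ} {x y : GraphSpace d m}
    (h : ¬ InPerpCone θ x y) : Real.cos θ * dist y x ≤ dist (proj1 y) (proj1 x) :=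
  calc Real.cos θ * dist y x ≤ infDist (y - x) (VperpSet d m) := not_lt.1 h
    _ ≤ ‖proj1 (y - x)‖ := infDist_vperpSet_le _
    _ = dist (proj1 y) (proj1 x) := by rw [proj1_sub, dist_eq_norm]

end Cone

lemma le_mul_add_setEDist {α : Type*} [PseudoEMetricSpace α] {S U : Set α} {a c D : ℝ≥0∞}
    (hc₀ : c ≠ 0) (hc : c ≠ ∞) (h : ∀ s ∈ S, ∀ t ∈ U, a ≤ c * (D + edist s t)) :
    a ≤ c * (D + setEDist S U) := by
  simp only [setEDist, ENNReal.add_iInf, ENNReal.mul_iInf_of_ne hc₀ hc]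
  refine le_iInf₂ fun s hs => ?_
  change a ≤ c * (D + infEDist s U)
  simp only [infEDist, ENNReal.add_iInf, ENNReal.mul_iInf_of_ne hc₀ hc]
  exact le_iInf₂ (h s hs)

section Whitney

variable {θ r : ℝ} {d m : ℕ} {E K B' : Set (GraphSpace d m)} {S : Set (EuclideanSpace ℝ (Fin d))}

lemma not_inPerpCone_of_mem_badPart {x y : GraphSpace d m} (hy : y ∈ badPart θ r E K B')
    (hx : x ∈ K) (hB' : B' ⊆ ball x r) : ¬ InPerpCone θ x y :=
  fun h => hy.2 x hx ⟨hB' hy.1.2, h⟩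

lemma edist_le_of_mem_badPart (hcos : 0 < Real.cos θ) {x y : GraphSpace d m}
    (hy : y ∈ badPart θ r E K B') (hx : x ∈ K) (hB' : B' ⊆ ball x r) :
    edist y x ≤ ENNReal.ofReal (Real.cos θ)⁻¹ * edist (proj1 y) (proj1 x) := by
  rw [edist_dist, edist_dist, ← ENNReal.ofReal_mul (by positivity)]
  refine ENNReal.ofReal_le_ofReal ?_
  rw [inv_mul_eq_div, le_div_iff₀' hcos]
  exact cos_mul_dist_le_of_not_inPerpCone (not_inPerpCone_of_mem_badPart hy hx hB')

lemma ediam_whitneyPiece_le_of_mem (hcos : 0 < Real.cos θ) {s : EuclideanSpace ℝ (Fin d)}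
    (hs : s ∈ S) {x : GraphSpace d m} (hx : x ∈ K) (hB' : B' ⊆ ball x r) :
    ediam (whitneyPiece S (badPart θ r E K B')) ≤
      2 * ENNReal.ofReal (Real.cos θ)⁻¹ * (ediam S + edist s (proj1 x)) := by
  rw [mul_assoc]
  refine (ediam_mono fun y hy => ?_).trans (ediam_closedEBall_le (x := x))
  calc edist y x ≤ ENNReal.ofReal (Real.cos θ)⁻¹ * edist (proj1 y) (proj1 x) :=
        edist_le_of_mem_badPart hcos hy.1 hx hB'
    _ ≤ ENNReal.ofReal (Real.cos θ)⁻¹ * (ediam S + edist s (proj1 x)) := by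
        gcongr
        exact (edist_triangle _ s _).trans (add_le_add_left (edist_le_ediam_of_mem hy.2 hs) _)

theorem ediam_whitneyPiece_le (hcos : 0 < Real.cos θ) (hB' : ∀ x ∈ K, B' ⊆ ball x r) :
    ediam (whitneyPiece S (badPart θ r E K B')) ≤
      2 * ENNReal.ofReal (Real.cos θ)⁻¹ * (ediam S + setEDist S (proj1 '' K)) := by
  refine le_mul_add_setEDist (by simp [hcos]) (by finiteness) ?_
  rintro s hs _ ⟨x, hx, rfl⟩
  exact ediam_whitneyPiece_le_of_mem hcos hs hx (hB' x hx)

end Whitney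

theorem stmt14 (θ : ℝ) (hθ : θ ∈ Ioo 0 (Real.pi / 2)) (A : ℝ) (hA : 1 ≤ A) :
    ∃ C : ℝ, 0 < C ∧
    ∀ (d m : ℕ), 0 < d → 0 < m →
    ∀ (r : ℝ), 0 < r →
    ∀ (E K : Set (GraphSpace d m)), IsCompact K → K ⊆ E →
      EMetric.diam K < ENNReal.ofReal r →
      (∀ x ∈ K, ∀ y ∈ E, y ∈ ball x r → ¬ InPerpCone θ x y) →
    ∀ (f : EuclideanSpace ℝ (Fin d) → EuclideanSpace ℝ (Fin m)),
      LipschitzWith (Real.toNNReal (1 / Real.cos θ)) f →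
      (∀ x ∈ K, graphMap f (proj1 x) = x) →
    ∀ (x' : GraphSpace d m) (ρ : ℝ), K ⊆ ball x' ρ →
      (∀ x ∈ K, ball x' ρ ⊆ ball x r) →
    ∀ (S : Set (EuclideanSpace ℝ (Fin d))), IsCube S →
      Disjoint S (proj1 '' K) →
      setEDist S (proj1 '' K) ≤ ENNReal.ofReal A * EMetric.diam S →
      EMetric.diam S ≤ ENNReal.ofReal A * setEDist S (proj1 '' K) →
      EMetric.diam (whitneyPiece S (badPart θ r E K (ball x' ρ))) ≤
        ENNReal.ofReal C * EMetric.diam S := by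
  have hcos : 0 < Real.cos θ :=
    Real.cos_pos_of_mem_Ioo ⟨by linarith [hθ.1, Real.pi_pos], hθ.2⟩
  refine ⟨2 * (Real.cos θ)⁻¹ * (1 + A), mul_pos (by positivity) (by linarith), ?_⟩
  intro d m _ _ r _ E K _ _ _ _ _ _ _ x' ρ _ hB' S _ _ hdist _
  calc ediam (whitneyPiece S (badPart θ r E K (ball x' ρ)))
      ≤ 2 * ENNReal.ofReal (Real.cos θ)⁻¹ * (ediam S + setEDist S (proj1 '' K)) :=
        ediam_whitneyPiece_le hcos hB'
    _ ≤ 2 * ENNReal.ofReal (Real.cos θ)⁻¹ * (ediam S + ENNReal.ofReal A * ediam S) := by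
        gcongr; exact hdist
    _ = ENNReal.ofReal (2 * (Real.cos θ)⁻¹ * (1 + A)) * ediam S := by
        rw [ENNReal.ofReal_mul (by positivity), ENNReal.ofReal_mul zero_le_two,
          ENNReal.ofReal_add zero_le_one (by linarith), ENNReal.ofReal_one, ENNReal.ofReal_ofNat]
        ring
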